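/- arXiv:1911.06319 — 4 statements merged into one kernel-verified Lean document; each statement's English description precedes it below -/
import Mathlib

section
/- For the thresholded linear environment with weight vectors uniformly distributed on the unit ball in ℝⁿ (n ≥ 2) and σ(y,y') = |y - y'|, the CDM between two nonzero vectors x and x' equals θ/π, where θ ∈ [0,π] is the angle between x and x'. -/
/-!
For an orthonormal pair `(v, w)` put `d t = cos t • v + sin t • w`. The weights `a` on which the
thresholded units of `x` and `x'` disagree form two wedges `{⟪d 0, a⟫ > 0 ≥ ⟪d θ, a⟫}` of
opening `θ`, the angle between `x` and `x'`. Let `μ` be volume on the unit ball, or any finite,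
absolutely continuous measure invariant under linear isometries. Isometries carry a wedge onto
any other wedge of the same opening, and a wedge of opening `s + t` is, up to a hyperplane, the
disjoint union of wedges of openings `s` and `t`; so the mass of a wedge is a nonnegative additive
function of its opening on `[0, π]`, hence linear in it. At opening `π` the wedge is a half-space,
of half the total mass by the symmetry `a ↦ -a`.
-/

open Module Real Set MeasureTheory InnerProductGeometry
open scoped RealInnerProductSpace symmDiff

section AdditiveOnInterval

variable {f : ℝ → ℝ} {L : ℝ}
  (hf : ∀ t ∈ Icc 0 L, 0 ≤ f t)
  (hadd : ∀ s t, 0 ≤ s → 0 ≤ t → s + t ≤ L → f (s + t) = f s + f t)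
include hadd

theorem map_nat_mul_of_add {m : ℕ} {δ : ℝ} (hδ : 0 ≤ δ) (hm : m * δ ≤ L) :
    f (m * δ) = m * f δ := by
  induction m with
  | zero => simpa using hadd 0 0 le_rfl le_rfl (by simpa using hm)
  | succ m ih =>
    push_cast at hm ⊢
    have hmδ : m * δ ≤ L := by nlinarith
    rw [add_one_mul, hadd _ _ (by positivity) hδ (by linarith), ih hmδ, add_one_mul]

include hf in
theorem monotoneOn_of_add : MonotoneOn f (Icc 0 L) := by
  intro s hs t ht hst
  have h := hadd s (t - s) hs.1 (by linarith) (by linarith [ht.2])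
  rw [add_sub_cancel] at h
  linarith [hf (t - s) ⟨by linarith, by linarith [ht.2, hs.1]⟩]

theorem map_grid_of_add (hL : 0 < L) {k m : ℕ} (hk : 0 < k) (hmk : m ≤ k) :
    f (m * (L / k)) = m / k * f L := by
  have hk' : (0 : ℝ) < k := by exact_mod_cast hk
  have hδ : 0 ≤ L / k := by positivity
  have hone : f L = k * f (L / k) := by
    simpa [mul_div_cancel₀ L hk'.ne'] using
      map_nat_mul_of_add hadd (m := k) hδ (by rw [mul_div_cancel₀ L hk'.ne'])
  have hgrid : (m : ℝ) * (L / k) ≤ L := by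
    calc (m : ℝ) * (L / k) ≤ k * (L / k) := by gcongr
      _ = L := mul_div_cancel₀ L hk'.ne'
  rw [map_nat_mul_of_add hadd hδ hgrid, hone]
  field_simp

include hf in
theorem eq_div_mul_of_add_of_nonneg (hL : 0 < L) {t : ℝ} (ht : t ∈ Icc 0 L) :
    f t = t / L * f L := by
  have hfL : 0 ≤ f L := hf L ⟨hL.le, le_rfl⟩
  refine eq_of_forall_dist_le fun ε hε ↦ ?_
  obtain ⟨k, hk⟩ := exists_nat_gt (f L / ε)
  have hk' : (0 : ℝ) < k := lt_of_le_of_lt (by positivity) hk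
  have hδ : 0 < L / k := by positivity
  set r := t / (L / k)
  have hr : 0 ≤ r := div_nonneg ht.1 hδ.le
  have hrk : r ≤ k := by rw [div_le_iff₀ hδ, mul_div_cancel₀ L hk'.ne']; exact ht.2
  have hmem : ∀ m : ℕ, m ≤ k → (m : ℝ) * (L / k) ∈ Icc 0 L := fun m hm ↦
    ⟨by positivity, by
      calc (m : ℝ) * (L / k) ≤ k * (L / k) := by gcongr
        _ = L := mul_div_cancel₀ L hk'.ne'⟩
  have hfloor : ⌊r⌋₊ ≤ k := Nat.floor_le_of_le hrk
  have hceil : ⌈r⌉₊ ≤ k := Nat.ceil_le.mpr hrk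
  have hlow : ⌊r⌋₊ / k * f L ≤ f t := by
    rw [← map_grid_of_add hadd hL (by exact_mod_cast hk') hfloor]
    exact monotoneOn_of_add hf hadd (hmem _ hfloor) ht ((le_div_iff₀ hδ).mp (Nat.floor_le hr))
  have hhigh : f t ≤ ⌈r⌉₊ / k * f L := by
    rw [← map_grid_of_add hadd hL (by exact_mod_cast hk') hceil]
    exact monotoneOn_of_add hf hadd ht (hmem _ hceil) ((div_le_iff₀ hδ).mp (Nat.le_ceil r))
  have hlow' : (r - 1) / k * f L ≤ ⌊r⌋₊ / k * f L := by
    gcongr; linarith [Nat.lt_floor_add_one r]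
  have hhigh' : ⌈r⌉₊ / k * f L ≤ (r + 1) / k * f L := by
    gcongr; exact (Nat.ceil_lt_add_one hr).le
  have htr : t / L = r / k := by simp only [r]; field_simp
  have hεk : f L / k ≤ ε := by
    rw [div_le_iff₀ hk']; rw [div_lt_iff₀ hε] at hk; linarith
  rw [Real.dist_eq, abs_le, htr]
  constructor <;> linarith [show (r - 1) / k * f L = r / k * f L - f L / k by ring,
    show (r + 1) / k * f L = r / k * f L + f L / k by ring]

end AdditiveOnInterval

theorem cos_mul_add_sin_mul_nonpos_of_le {p q s τ : ℝ} (hs : 0 ≤ s) (hsτ : s ≤ τ) (hτ : τ ≤ π)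
    (hp : 0 < p) (h : cos s * p + sin s * q ≤ 0) : cos τ * p + sin τ * q ≤ 0 := by
  rcases hτ.lt_or_eq with hτ | rfl
  · have hs0 : 0 < s := hs.lt_of_ne <| by rintro rfl; simp at h; linarith
    have hsin_s : 0 < sin s := sin_pos_of_pos_of_lt_pi hs0 (by linarith)
    have hsin_τ : 0 ≤ sin τ := sin_nonneg_of_nonneg_of_le_pi (by linarith) hτ.le
    have hsin_τs : 0 ≤ sin (τ - s) := sin_nonneg_of_nonneg_of_le_pi (by linarith) (by linarith)
    have key : sin s * (cos τ * p + sin τ * q) =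
        sin τ * (cos s * p + sin s * q) - sin (τ - s) * p := by
      rw [sin_sub]; ring
    nlinarith
  · simp; linarith

theorem nonneg_of_cos_mul_add_sin_mul {p q s τ : ℝ} (hs : 0 ≤ s) (hsτ : s ≤ τ) (hτ : τ ≤ π)
    (hpos : 0 < cos s * p + sin s * q) (hnonpos : cos τ * p + sin τ * q ≤ 0) : 0 ≤ p := by
  rcases (sub_nonneg.2 hsτ).lt_or_eq with hlt | heq
  · rcases (show τ - s ≤ π by linarith).lt_or_eq with hlt' | heq'
    · have hsin_s : 0 ≤ sin s := sin_nonneg_of_nonneg_of_le_pi hs (by linarith)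
      have hsin_τ : 0 ≤ sin τ := sin_nonneg_of_nonneg_of_le_pi (by linarith) hτ
      have hsin_τs : 0 < sin (τ - s) := sin_pos_of_pos_of_lt_pi hlt hlt'
      have key : sin (τ - s) * p =
          sin τ * (cos s * p + sin s * q) - sin s * (cos τ * p + sin τ * q) := by
        rw [sin_sub]; ring
      nlinarith
    · obtain rfl : s = 0 := by linarith
      simp at hpos; exact hpos.le
  · rw [show τ = s by linarith] at hnonpos; linarith

section InnerProductSpace

variable {E : Type*} [NormedAddCommGroup E] [InnerProductSpace ℝ E]

theorem orthonormal_pair_iff {v w : E} :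
    Orthonormal ℝ ![v, w] ↔ ‖v‖ = 1 ∧ ‖w‖ = 1 ∧ ⟪v, w⟫ = 0 := by
  simp [orthonormal_vecCons_iff]
  tauto

noncomputable def circleDir (v w : E) (t : ℝ) : E := cos t • v + sin t • w

theorem inner_circleDir_left (v w a : E) (t : ℝ) :
    ⟪circleDir v w t, a⟫ = cos t * ⟪v, a⟫ + sin t * ⟪w, a⟫ := by
  rw [circleDir, inner_add_left, real_inner_smul_left, real_inner_smul_left]

theorem circleDir_circleDir (v w : E) (s t : ℝ) :
    circleDir (circleDir v w s) (circleDir v w (s + π / 2)) t = circleDir v w (s + t) := by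
  simp only [circleDir]
  rw [cos_add_pi_div_two, sin_add_pi_div_two, cos_add, sin_add]
  module

theorem Orthonormal.rotate {v w : E} (h : Orthonormal ℝ ![v, w]) (s : ℝ) :
    Orthonormal ℝ ![circleDir v w s, circleDir v w (s + π / 2)] := by
  rw [orthonormal_pair_iff] at h ⊢
  obtain ⟨hv, hw, hvw⟩ := h
  have hwv : ⟪w, v⟫ = 0 := by rw [real_inner_comm]; exact hvw
  have hnorm : ∀ t, ‖circleDir v w t‖ = 1 := fun t ↦ by
    rw [← pow_eq_one_iff_of_nonneg (norm_nonneg _) two_ne_zero, circleDir, norm_add_sq_real,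
      norm_smul, norm_smul, mul_pow, mul_pow, hv, hw, real_inner_smul_left, real_inner_smul_right,
      hvw, Real.norm_eq_abs, Real.norm_eq_abs, sq_abs, sq_abs]
    linear_combination cos_sq_add_sin_sq t
  refine ⟨hnorm s, hnorm _, ?_⟩
  simp only [circleDir, inner_add_left, inner_add_right, real_inner_smul_left,
    real_inner_smul_right, real_inner_self_eq_norm_sq, hv, hw, hvw, hwv, cos_add_pi_div_two,
    sin_add_pi_div_two]
  ring

theorem LinearIsometryEquiv.map_circleDir (T : E ≃ₗᵢ[ℝ] E) (v w : E) (t : ℝ) :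
    T (circleDir v w t) = circleDir (T v) (T w) t := by
  simp [circleDir]

variable [FiniteDimensional ℝ E]

theorem Orthonormal.exists_orthonormalBasis_comp_eq {ι : Type*} [Fintype ι] {v : ι → E}
    (hv : Orthonormal ℝ v) (j : ι ↪ Fin (finrank ℝ E)) :
    ∃ b : OrthonormalBasis (Fin (finrank ℝ E)) ℝ E, ∀ i, b (j i) = v i := by
  have hrestrict : (Set.range j).domRestrict (Function.extend j v 0) =
      v ∘ (Equiv.ofInjective j j.injective).symm := by
    ext ⟨_, i, rfl⟩
    simp only [Set.domRestrict_apply, Function.comp_apply]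
    rw [j.injective.extend_apply]
    simp
  obtain ⟨b, hb⟩ := Orthonormal.exists_orthonormalBasis_extension_of_card_eq (by simp)
    (hrestrict ▸ hv.comp _ (Equiv.injective _))
  exact ⟨b, fun i ↦ (hb _ ⟨i, rfl⟩).trans (j.injective.extend_apply _ _ _)⟩

theorem Orthonormal.exists_linearIsometryEquiv_apply_eq {ι : Type*} [Fintype ι] {v v' : ι → E}
    (hv : Orthonormal ℝ v) (hv' : Orthonormal ℝ v') :
    ∃ T : E ≃ₗᵢ[ℝ] E, ∀ i, T (v i) = v' i := by
  obtain ⟨j⟩ : Nonempty (ι ↪ Fin (finrank ℝ E)) := Function.Embedding.nonempty_of_card_le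
    (by simpa using hv.linearIndependent.fintype_card_le_finrank)
  obtain ⟨b, hb⟩ := hv.exists_orthonormalBasis_comp_eq j
  obtain ⟨b', hb'⟩ := hv'.exists_orthonormalBasis_comp_eq j
  exact ⟨b.equiv b' (Equiv.refl _), fun i ↦ by simp [← hb, ← hb']⟩

theorem exists_orthonormal_pair (hE : 2 ≤ finrank ℝ E) {u : E} (hu : ‖u‖ = 1) :
    ∃ w, Orthonormal ℝ ![u, w] := by
  have : Fact (finrank ℝ E = (finrank ℝ E - 1) + 1) := ⟨by omega⟩
  have hu0 : u ≠ 0 := by rintro rfl; simp at hu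
  have hK : (ℝ ∙ u)ᗮ ≠ ⊥ := by
    rw [ne_eq, ← Submodule.finrank_eq_zero,
      Submodule.finrank_orthogonal_span_singleton (n := finrank ℝ E - 1) hu0]
    omega
  obtain ⟨y, hy, hy0⟩ := Submodule.exists_mem_ne_zero_of_ne_bot hK
  refine ⟨‖y‖⁻¹ • y, orthonormal_pair_iff.2 ⟨hu, ?_, ?_⟩⟩
  · rw [norm_smul, norm_inv, norm_norm, inv_mul_cancel₀ (norm_ne_zero_iff.2 hy0)]
  · rw [real_inner_smul_right, Submodule.mem_orthogonal_singleton_iff_inner_right.1 hy, mul_zero]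

theorem exists_orthonormal_eq_circleDir_angle (hE : 2 ≤ finrank ℝ E) {u u' : E}
    (hu : ‖u‖ = 1) (hu' : ‖u'‖ = 1) :
    ∃ w, Orthonormal ℝ ![u, w] ∧ u' = circleDir u w (angle u u') := by
  set θ := angle u u'
  have hcos : cos θ = ⟪u, u'⟫ := by rw [cos_angle, hu, hu', mul_one, div_one]
  set r := u' - cos θ • u with hr
  have hur : ⟪u, r⟫ = 0 := by
    rw [inner_sub_right, real_inner_smul_right, real_inner_self_eq_norm_sq, hu, hcos]; ring
  have hr_sq : ‖r‖ ^ 2 = sin θ ^ 2 := by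
    rw [hr, norm_sub_sq_real, norm_smul, real_inner_smul_right, hu, hu', Real.norm_eq_abs,
      real_inner_comm, ← hcos, mul_one, sq_abs, sin_sq]
    ring
  have hr_norm : ‖r‖ = sin θ :=
    (pow_left_inj₀ (norm_nonneg _) (sin_angle_nonneg u u') two_ne_zero).1 hr_sq
  rcases eq_or_ne (sin θ) 0 with hsin | hsin
  · obtain ⟨w, hw⟩ := exists_orthonormal_pair hE hu
    refine ⟨w, hw, ?_⟩
    rw [circleDir, hsin, zero_smul, add_zero, ← sub_eq_zero, ← norm_eq_zero, ← hr, hr_norm, hsin]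
  · refine ⟨(sin θ)⁻¹ • r, orthonormal_pair_iff.2 ⟨hu, ?_, ?_⟩, ?_⟩
    · rw [norm_smul, norm_inv, hr_norm, Real.norm_eq_abs, abs_of_nonneg (sin_angle_nonneg u u'),
        inv_mul_cancel₀ hsin]
    · rw [real_inner_smul_right, hur, mul_zero]
    · rw [circleDir, smul_smul, mul_inv_cancel₀ hsin, one_smul, hr, add_sub_cancel]

end InnerProductSpace

section HalfSpace

variable {E : Type*} [NormedAddCommGroup E] [InnerProductSpace ℝ E]

def openHalfSpace (v : E) : Set E := {a | 0 < ⟪v, a⟫}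

def wedge (v w : E) (δ : ℝ) : Set E := openHalfSpace v \ openHalfSpace (circleDir v w δ)

theorem openHalfSpace_smul_of_pos {c : ℝ} (hc : 0 < c) (v : E) :
    openHalfSpace (c • v) = openHalfSpace v := by
  ext a
  simp only [openHalfSpace, mem_ofPred_eq, real_inner_smul_left, mul_pos_iff_of_pos_left hc]

theorem LinearIsometryEquiv.preimage_openHalfSpace_apply (T : E ≃ₗᵢ[ℝ] E) (v : E) :
    T ⁻¹' openHalfSpace (T v) = openHalfSpace v := by
  ext a
  simp [openHalfSpace, LinearIsometryEquiv.inner_map_map]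

theorem wedge_pi (v w : E) : wedge v w π = openHalfSpace v := by
  ext a
  simp only [wedge, openHalfSpace, mem_sdiff, mem_ofPred_eq, inner_circleDir_left, cos_pi, sin_pi]
  constructor
  · exact fun h ↦ h.1
  · exact fun h ↦ ⟨h, by linarith⟩

/-- Equality fails on the hyperplane `⟪v, a⟫ = 0` when `s + t = π`. -/
theorem wedge_union_subset {v w : E} {s t : ℝ} (hs : 0 ≤ s) (ht : 0 ≤ t) (hst : s + t ≤ π) :
    wedge v w s ∪ (openHalfSpace (circleDir v w s) \ openHalfSpace (circleDir v w (s + t))) ⊆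
      wedge v w (s + t) ∪ {a | ⟪v, a⟫ = 0} := by
  rintro a (⟨hv, hs'⟩ | ⟨hs', hst'⟩) <;>
    simp only [wedge, openHalfSpace, mem_ofPred_eq, not_lt, inner_circleDir_left, mem_union,
      mem_sdiff] at *
  · exact .inl ⟨hv, cos_mul_add_sin_mul_nonpos_of_le hs (by linarith) hst hv hs'⟩
  · rcases (nonneg_of_cos_mul_add_sin_mul hs (by linarith) hst hs' hst').eq_or_lt with h | h
    · exact .inr h.symm
    · exact .inl ⟨h, hst'⟩

variable [MeasurableSpace E] [BorelSpace E]

theorem measurableSet_openHalfSpace (v : E) : MeasurableSet (openHalfSpace v) :=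
  (isOpen_lt continuous_const (continuous_const.inner continuous_id)).measurableSet

theorem measurableSet_wedge (v w : E) (δ : ℝ) : MeasurableSet (wedge v w δ) :=
  (measurableSet_openHalfSpace _).diff (measurableSet_openHalfSpace _)

variable [FiniteDimensional ℝ E] {μ : Measure E}
  (hμ : ∀ T : E ≃ₗᵢ[ℝ] E, MeasurePreserving T μ μ) (hμ0 : μ ≪ volume)

include hμ0 in
theorem measure_inner_eq_zero {v : E} (hv : v ≠ 0) :
    μ {a | ⟪v, a⟫ = 0} = 0 := by
  refine hμ0 (Measure.addHaar_submodule volume (LinearMap.ker (innerₛₗ ℝ v)) fun htop ↦ hv ?_)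
  have : v ∈ LinearMap.ker (innerₛₗ ℝ v) := htop ▸ Submodule.mem_top
  exact inner_self_eq_zero.1 this

include hμ in
theorem measure_wedge_eq {v w v' w' : E}
    (h : Orthonormal ℝ ![v, w]) (h' : Orthonormal ℝ ![v', w']) (δ : ℝ) :
    μ (wedge v w δ) = μ (wedge v' w' δ) := by
  obtain ⟨T, hT⟩ := h.exists_linearIsometryEquiv_apply_eq h'
  have hv : T v = v' := hT 0
  have hw : T w = w' := hT 1
  have hpre : T ⁻¹' wedge v' w' δ = wedge v w δ := by
    rw [wedge, wedge, preimage_sdiff, ← hv, ← hw, ← T.map_circleDir,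
      T.preimage_openHalfSpace_apply, T.preimage_openHalfSpace_apply]
  rw [← hpre, (hμ T).measure_preimage (measurableSet_wedge _ _ _).nullMeasurableSet]

variable [IsFiniteMeasure μ]
include hμ hμ0

theorem measureReal_wedge_add {v w : E} (h : Orthonormal ℝ ![v, w]) {s t : ℝ} (hs : 0 ≤ s)
    (ht : 0 ≤ t) (hst : s + t ≤ π) :
    μ.real (wedge v w (s + t)) = μ.real (wedge v w s) + μ.real (wedge v w t) := by
  set B := openHalfSpace (circleDir v w s)
  set C := openHalfSpace (circleDir v w (s + t))
  have hv0 : v ≠ 0 := by rintro rfl; simp at h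
  have hBC : B \ C = wedge (circleDir v w s) (circleDir v w (s + π / 2)) t := by
    rw [wedge, circleDir_circleDir]
  have hsplit : μ (wedge v w (s + t)) = μ (wedge v w s ∪ B \ C) :=
    le_antisymm (measure_mono (sdiff_triangle _ B _)) (measure_mono_ae (ae_le_set.2
      (measure_mono_null (sdiff_subset_iff.2 (wedge_union_subset hs ht hst))
        (measure_inner_eq_zero hμ0 hv0))))
  calc μ.real (wedge v w (s + t))
    _ = μ.real (wedge v w s ∪ B \ C) := congrArg ENNReal.toReal hsplit
    _ = μ.real (wedge v w s) + μ.real (B \ C) :=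
      measureReal_union (disjoint_sdiff_left.mono_right sdiff_le)
        ((measurableSet_openHalfSpace _).diff (measurableSet_openHalfSpace _))
    _ = μ.real (wedge v w s) + μ.real (wedge v w t) := by
      rw [hBC]
      exact congrArg (μ.real (wedge v w s) + ENNReal.toReal ·)
        (measure_wedge_eq hμ (h.rotate s) h t)

theorem measureReal_openHalfSpace {v : E} (hv : v ≠ 0) :
    μ.real (openHalfSpace v) = μ.real univ / 2 := by
  have hneg : μ (openHalfSpace (-v)) = μ (openHalfSpace v) := by
    rw [← (hμ (LinearIsometryEquiv.neg ℝ)).measure_preimage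
      (measurableSet_openHalfSpace _).nullMeasurableSet]
    exact congrArg μ ((LinearIsometryEquiv.neg ℝ).preimage_openHalfSpace_apply v)
  have hcover : univ ⊆ (openHalfSpace v ∪ openHalfSpace (-v)) ∪ {a | ⟪v, a⟫ = 0} := by
    intro a _
    rcases lt_trichotomy ⟪v, a⟫ 0 with h | h | h
    · exact .inl (.inr (by simpa [openHalfSpace] using h))
    · exact .inr h
    · exact .inl (.inl h)
  have hdisj : Disjoint (openHalfSpace v) (openHalfSpace (-v)) :=
    disjoint_left.2 fun a ha ha' ↦ by
      simp only [openHalfSpace, mem_ofPred_eq, inner_neg_left] at ha ha'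
      linarith
  have huniv : μ univ = μ (openHalfSpace v ∪ openHalfSpace (-v)) :=
    le_antisymm (measure_mono_ae (ae_le_set.2
      (measure_mono_null (sdiff_subset_iff.2 hcover) (measure_inner_eq_zero hμ0 hv))))
      (measure_mono (subset_univ _))
  simp only [Measure.real]
  rw [huniv, measure_union hdisj (measurableSet_openHalfSpace _), hneg,
    ENNReal.toReal_add (measure_ne_top _ _) (measure_ne_top _ _)]
  ring

theorem measureReal_wedge {v w : E} (h : Orthonormal ℝ ![v, w]) {δ : ℝ} (hδ : δ ∈ Icc 0 π) :
    μ.real (wedge v w δ) = δ / (2 * π) * μ.real univ := by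
  have hv0 : v ≠ 0 := by rintro rfl; simp at h
  rw [eq_div_mul_of_add_of_nonneg (f := fun δ ↦ μ.real (wedge v w δ))
      (fun _ _ ↦ measureReal_nonneg)
      (fun s t hs ht hst ↦ measureReal_wedge_add hμ hμ0 h hs ht hst)
      pi_pos hδ,
    wedge_pi, measureReal_openHalfSpace hμ hμ0 hv0]
  field_simp

theorem measureReal_openHalfSpace_sdiff (hE : 2 ≤ finrank ℝ E) {x x' : E} (hx : x ≠ 0)
    (hx' : x' ≠ 0) :
    μ.real (openHalfSpace x \ openHalfSpace x') = angle x x' / (2 * π) * μ.real univ := by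
  have hxpos : 0 < ‖x‖⁻¹ := inv_pos.2 (norm_pos_iff.2 hx)
  have hx'pos : 0 < ‖x'‖⁻¹ := inv_pos.2 (norm_pos_iff.2 hx')
  obtain ⟨w, hw, hdir⟩ := exists_orthonormal_eq_circleDir_angle hE
    (by simpa using norm_smul_inv_norm (𝕜 := ℝ) hx)
    (by simpa using norm_smul_inv_norm (𝕜 := ℝ) hx')
  rw [angle_smul_left_of_pos _ _ hxpos, angle_smul_right_of_pos _ _ hx'pos] at hdir
  rw [← openHalfSpace_smul_of_pos hxpos x, ← openHalfSpace_smul_of_pos hx'pos x', hdir, ← wedge,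
    measureReal_wedge hμ hμ0 hw ⟨angle_nonneg _ _, angle_le_pi _ _⟩]

theorem measureReal_openHalfSpace_symmDiff (hE : 2 ≤ finrank ℝ E) {x x' : E} (hx : x ≠ 0)
    (hx' : x' ≠ 0) :
    μ.real (openHalfSpace x ∆ openHalfSpace x') = angle x x' / π * μ.real univ := by
  rw [measureReal_symmDiff_eq (measurableSet_openHalfSpace _) (measurableSet_openHalfSpace _),
    measureReal_openHalfSpace_sdiff hμ hμ0 hE hx hx',
    measureReal_openHalfSpace_sdiff hμ hμ0 hE hx' hx, angle_comm]
  ring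

end HalfSpace

theorem LinearIsometryEquiv.measurePreserving_restrict_closedBall {E : Type*}
    [NormedAddCommGroup E] [InnerProductSpace ℝ E] [FiniteDimensional ℝ E] [MeasurableSpace E]
    [BorelSpace E] (T : E ≃ₗᵢ[ℝ] E) (r : ℝ) :
    MeasurePreserving T (volume.restrict (Metric.closedBall 0 r))
      (volume.restrict (Metric.closedBall 0 r)) := by
  simpa [T.preimage_closedBall] using
    T.measurePreserving.restrict_preimage (s := Metric.closedBall 0 r) measurableSet_closedBall

/-- For the thresholded linear environment with weights uniform on the unit
ball in ℝⁿ (n ≥ 2), the CDM between two nonzero vectors equals θ/π, where θ is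
the angle between them. -/
theorem cdm_thresholded_linear (n : ℕ) (hn : 2 ≤ n)
    (x x' : EuclideanSpace ℝ (Fin n)) (hx : x ≠ 0) (hx' : x' ≠ 0)
    (H : ℝ → ℝ) (hH : ∀ t, H t = if 0 < t then 1 else 0) :
    (∫ a in Metric.closedBall (0 : EuclideanSpace ℝ (Fin n)) 1,
        |H (∑ i, a i * x i) - H (∑ i, a i * x' i)|) /
      (volume (Metric.closedBall (0 : EuclideanSpace ℝ (Fin n)) 1)).toReal =
    Real.arccos ((∑ i, x i * x' i) / (‖x‖ * ‖x'‖)) / Real.pi := by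
  set B := Metric.closedBall (0 : EuclideanSpace ℝ (Fin n)) 1
  have : IsFiniteMeasure (volume.restrict B) :=
    isFiniteMeasure_restrict.2 measure_closedBall_lt_top.ne
  have hsum : ∀ y a : EuclideanSpace ℝ (Fin n), ∑ i, a i * y i = ⟪y, a⟫ := fun y a ↦ by
    simp [PiLp.inner_apply]
  have hstep : ∀ y a : EuclideanSpace ℝ (Fin n),
      H (∑ i, a i * y i) = (openHalfSpace y).indicator 1 a := fun y a ↦ by
    rw [hsum, hH]
    by_cases h : 0 < ⟪y, a⟫ <;> simp [openHalfSpace, h]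
  have hintegrand : ∀ a, |H (∑ i, a i * x i) - H (∑ i, a i * x' i)| =
      (openHalfSpace x ∆ openHalfSpace x').indicator 1 a := fun a ↦ by
    rw [hstep, hstep, ← apply_indicator_symmDiff abs_neg]
    exact abs_of_nonneg (indicator_nonneg (fun _ _ ↦ zero_le_one) a)
  simp_rw [hintegrand]
  rw [integral_indicator_one ((measurableSet_openHalfSpace _).symmDiff
      (measurableSet_openHalfSpace _)),
    measureReal_openHalfSpace_symmDiff (fun T ↦ T.measurePreserving_restrict_closedBall 1)
      Measure.restrict_le_self.absolutelyContinuous (by simpa using hn) hx hx',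
    measureReal_restrict_apply_univ, hsum, real_inner_comm, ← measureReal_def]
  have hB : volume.real B ≠ 0 :=
    (ENNReal.toReal_pos (Metric.measure_closedBall_pos volume 0 one_pos).ne'
      measure_closedBall_lt_top.ne).ne'
  rw [mul_div_cancel_right₀ _ hB]
  rfl
end

section
/- For any quantization points x⃗ = {x₁,…,x_k} and any partition X⃗ = {X₁,…,X_k} of X faithful to x⃗ (i.e., x_i ∈ X_i), the reconstruction error of the environment satisfies E_F(x⃗, X⃗) ≥ E_F(x⃗, X⃗^ρ), where X⃗^ρ is the Voronoi partition induced by the CDM ρ. That is, the CDM-induced Voronoi partition minimizes the expected approximation error of piecewise-constant approximations of functions in the environment. -/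
/-!
By Fubini the error is `∫ z, ∫ ω, σ (g ω z) (g ω (pts (idx z))) ∂Q ∂P = ∫ z, ρ z (pts (idx z)) ∂P`,
and the Voronoi assignment minimises the integrand `ρ z (pts i)` pointwise in `z`.
-/

open MeasureTheory

section IteratedIntegral

variable {α β : Type*} [MeasurableSpace α] [MeasurableSpace β]
  {μ : Measure α} {ν : Measure β} [SFinite μ] [SFinite ν]

theorem integral_integral_le_of_integral_swap_le {f g : α → β → ℝ}
    (hf : Integrable (Function.uncurry f) (μ.prod ν))
    (hg : Integrable (Function.uncurry g) (μ.prod ν))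
    (h : ∀ y, ∫ x, f x y ∂μ ≤ ∫ x, g x y ∂μ) :
    ∫ x, ∫ y, f x y ∂ν ∂μ ≤ ∫ x, ∫ y, g x y ∂ν ∂μ := by
  rw [integral_integral_swap hf, integral_integral_swap hg]
  exact integral_mono hf.integral_prod_right hg.integral_prod_right h

end IteratedIntegral

theorem voronoi_partition_optimal_general
    {Ω X Y : Type*} [MeasurableSpace Ω] [MeasurableSpace X]
    (Q : Measure Ω) [IsProbabilityMeasure Q]
    (P : Measure X) [IsProbabilityMeasure P]
    (g : Ω → X → Y) (σ : Y → Y → ℝ)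
    (ρ : X → X → ℝ)
    (hρ : ∀ x x', ρ x x' = ∫ ω, σ (g ω x) (g ω x') ∂Q)
    (k : ℕ) (pts : Fin k → X)
    -- an arbitrary partition {X₁,…,X_k}, encoded by the assignment map idx
    (idx : X → Fin k)
    -- Voronoi assignment induced by ρ, ties broken by the smallest index
    (q : X → Fin k)
    (hq : ∀ z, IsLeast {i : Fin k | ∀ j, ρ z (pts i) ≤ ρ z (pts j)} (q z))
    -- Fubini hypotheses: joint integrability of both approximation errors
    (hfub₁ : Integrable (fun p : Ω × X => σ (g p.1 p.2) (g p.1 (pts (idx p.2))))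
      (Q.prod P))
    (hfub₂ : Integrable (fun p : Ω × X => σ (g p.1 p.2) (g p.1 (pts (q p.2))))
      (Q.prod P)) :
    ∫ ω, ∫ z, σ (g ω z) (g ω (pts (idx z))) ∂P ∂Q ≥
      ∫ ω, ∫ z, σ (g ω z) (g ω (pts (q z))) ∂P ∂Q := by
  refine integral_integral_le_of_integral_swap_le hfub₂ hfub₁ fun z => ?_
  rw [← hρ, ← hρ]
  exact (hq z).1 (idx z)

/-- For any faithful partition X⃗ of X, the reconstruction error of the
environment is at least that of the Voronoi partition induced by the CDM:
E_F(x⃗, X⃗) ≥ E_F(x⃗, X⃗^ρ). -/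
theorem voronoi_partition_optimal
    {Ω X Y : Type*} [MeasurableSpace Ω] [MeasurableSpace X]
    (Q : Measure Ω) [IsProbabilityMeasure Q]
    (P : Measure X) [IsProbabilityMeasure P]
    (g : Ω → X → Y) (σ : Y → Y → ℝ)
    (ρ : X → X → ℝ)
    (hρ : ∀ x x', ρ x x' = ∫ ω, σ (g ω x) (g ω x') ∂Q)
    (hint : ∀ x x', Integrable (fun ω => σ (g ω x) (g ω x')) Q)
    (k : ℕ) (pts : Fin k → X)
    -- an arbitrary partition {X₁,…,X_k}, encoded by the assignment map idx
    (idx : X → Fin k)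
    -- faithfulness: x_i ∈ X_i
    (hfaithful : ∀ i, idx (pts i) = i)
    -- Voronoi assignment induced by ρ, ties broken by the smallest index
    (q : X → Fin k)
    (hq : ∀ z, IsLeast {i : Fin k | ∀ j, ρ z (pts i) ≤ ρ z (pts j)} (q z))
    -- Fubini hypotheses: joint integrability of both approximation errors
    (hfub₁ : Integrable (fun p : Ω × X => σ (g p.1 p.2) (g p.1 (pts (idx p.2))))
      (Q.prod P))
    (hfub₂ : Integrable (fun p : Ω × X => σ (g p.1 p.2) (g p.1 (pts (q p.2))))
      (Q.prod P)) :
    ∫ ω, ∫ z, σ (g ω z) (g ω (pts (idx z))) ∂P ∂Q ≥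
      ∫ ω, ∫ z, σ (g ω z) (g ω (pts (q z))) ∂P ∂Q :=
  voronoi_partition_optimal_general Q P g σ ρ hρ k pts idx q hq hfub₁ hfub₂
end

section
/- With the quadratic-environment CDM ρ(x,y) = |x² - y²| on [0,1] and uniform P, any interior optimal quantization point x_i (1 < i < k, ordered 0 ≤ x₁ ≤ … ≤ x_k ≤ 1) of the reconstruction error E_ρ(x⃗) = ∫₀¹ min_i |x² - x_i²| dx satisfies x_i² = (1/4)(x_{i-1}² + x_{i+1}²) + (1/(4√2))·√(x_{i-1}⁴ + 6 x_{i-1}² x_{i+1}² + x_{i+1}⁴). -/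
/-!
Write `a < m < b` for the neighbours of the point `m = xᵢ`. As long as `t` stays in `(a, b)`,
moving `xᵢ` to `t` leaves the error outside `[a, b]` unchanged, and on `[a, b]` the nearest
point is `a`, `t` or `b`, with boundaries at the ρ-midpoints `√((a² + t²)/2)` and
`√((t² + b²)/2)`. Integrating explicitly, the error is a constant plus
`4t³/3 - (4/3)((a² + t²)/2)^{3/2} - (4/3)((t² + b²)/2)^{3/2}`, whose derivative vanishes at `m`
exactly when `2m = √((a² + m²)/2) + √((m² + b²)/2)`. Squaring twice and choosing the root with
`m² ≥ (a² + b²)/4` gives the formula.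
-/

open MeasureTheory intervalIntegral

open Function Set Filter

theorem ciInf_update_eq_of_le {ι α : Type*} [Finite ι] [DecidableEq ι]
    [ConditionallyCompleteLinearOrder α] {f : ι → α} {i j : ι} {y : α} (hji : j ≠ i)
    (hy : f j ≤ y) (hfi : f j ≤ f i) :
    ⨅ l, update f i y l = ⨅ l, f l := by
  have : Nonempty ι := ⟨i⟩
  have hle : ∀ g g' : ι → α, (∀ l ≠ i, g l = g' l) → g j ≤ g' i → ⨅ l, g l ≤ ⨅ l, g' l := by
    intro g g' hgg' hj
    refine le_ciInf fun l => ?_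
    obtain rfl | hl := eq_or_ne l i
    · exact (ciInf_le (finite_range g).bddBelow j).trans hj
    · exact (ciInf_le (finite_range g).bddBelow l).trans_eq (hgg' l hl)
  refine le_antisymm (hle _ _ (fun l hl => update_of_ne hl _ _) ?_)
    (hle _ _ (fun l hl => (update_of_ne hl _ _).symm) ?_)
  · rwa [update_of_ne hji]
  · rwa [update_self]

theorem Monotone.update_of_covBy {ι α : Type*} [LinearOrder ι] [DecidableEq ι] [Preorder α]
    {f : ι → α} (hf : Monotone f) {j i l : ι} (hji : j ⋖ i) (hil : i ⋖ l) {t : α}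
    (ht : t ∈ Icc (f j) (f l)) : Monotone (update f i t) := by
  intro a b hab
  by_cases ha : a = i <;> by_cases hb : b = i
  · rw [ha, hb]
  · rw [ha, update_self, update_of_ne hb]
    exact ht.2.trans (hf (hil.ge_of_gt ((ha ▸ hab).lt_of_ne (Ne.symm hb))))
  · rw [hb, update_self, update_of_ne ha]
    exact (hf (hji.le_of_lt ((hb ▸ hab).lt_of_ne ha))).trans ht.1
  · rw [update_of_ne ha, update_of_ne hb]
    exact hf hab

theorem abs_sq_sub_sq_le_of_le_of_le {x y z : ℝ} (hx : 0 ≤ x) (hxy : x ≤ y) (hyz : y ≤ z) :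
    |x ^ 2 - y ^ 2| ≤ |x ^ 2 - z ^ 2| := by
  rw [abs_of_nonpos (by nlinarith), abs_of_nonpos (by nlinarith)]
  nlinarith

theorem abs_sq_sub_sq_le_of_le_of_le' {x y z : ℝ} (hz : 0 ≤ z) (hzy : z ≤ y) (hyx : y ≤ x) :
    |x ^ 2 - y ^ 2| ≤ |x ^ 2 - z ^ 2| := by
  rw [abs_of_nonneg (by nlinarith), abs_of_nonneg (by nlinarith)]
  nlinarith

noncomputable def nearestSqDist {ι : Type*} (q : ι → ℝ) (x : ℝ) : ℝ :=
  ⨅ j, |x ^ 2 - q j ^ 2|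

section nearestSqDist

variable {ι : Type*}

theorem bddBelow_range_abs_sq_sub_sq (q : ι → ℝ) (x : ℝ) :
    BddBelow (range fun j => |x ^ 2 - q j ^ 2|) :=
  ⟨0, by rintro _ ⟨j, rfl⟩; positivity⟩

theorem continuous_nearestSqDist [Finite ι] [Nonempty ι] (q : ι → ℝ) :
    Continuous (nearestSqDist q) := by
  cases nonempty_fintype ι
  have : nearestSqDist q = fun x => Finset.univ.inf' Finset.univ_nonempty
      fun j => |x ^ 2 - q j ^ 2| := by
    funext x
    exact (Finset.inf'_univ_eq_ciInf _).symm
  rw [this]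
  exact Continuous.finset_inf'_apply _ fun j _ => by fun_prop

theorem nearestSqDist_update_eq [Finite ι] [DecidableEq ι] {q : ι → ℝ} {i j : ι} {t x : ℝ}
    (hji : j ≠ i) (ht : |x ^ 2 - q j ^ 2| ≤ |x ^ 2 - t ^ 2|)
    (hi : |x ^ 2 - q j ^ 2| ≤ |x ^ 2 - q i ^ 2|) :
    nearestSqDist (update q i t) x = nearestSqDist q x := by
  simp only [nearestSqDist, apply_update (fun _ y => |x ^ 2 - y ^ 2|)]
  exact ciInf_update_eq_of_le hji ht hi

theorem nearestSqDist_eq_min_of_covBy [LinearOrder ι] {q : ι → ℝ} (hq : Monotone q)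
    (hq0 : ∀ l, 0 ≤ q l) {j j' : ι} (hjj' : j ⋖ j') {x : ℝ} (hx : x ∈ Icc (q j) (q j')) :
    nearestSqDist q x = min (x ^ 2 - q j ^ 2) (q j' ^ 2 - x ^ 2) := by
  obtain ⟨hjx, hxj'⟩ := hx
  have hx0 : 0 ≤ x := (hq0 j).trans hjx
  have hj : |x ^ 2 - q j ^ 2| = x ^ 2 - q j ^ 2 := abs_of_nonneg (by nlinarith [hq0 j])
  have hj' : |x ^ 2 - q j' ^ 2| = q j' ^ 2 - x ^ 2 := by
    rw [abs_sub_comm]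
    exact abs_of_nonneg (by nlinarith)
  have : Nonempty ι := ⟨j⟩
  apply le_antisymm
  · exact le_min ((ciInf_le (bddBelow_range_abs_sq_sub_sq q x) j).trans_eq hj)
      ((ciInf_le (bddBelow_range_abs_sq_sub_sq q x) j').trans_eq hj')
  · refine le_ciInf fun l => ?_
    rcases le_or_gt j' l with hl | hl
    · calc min (x ^ 2 - q j ^ 2) (q j' ^ 2 - x ^ 2) ≤ |x ^ 2 - q j' ^ 2| :=
            (min_le_right _ _).trans_eq hj'.symm
        _ ≤ |x ^ 2 - q l ^ 2| := abs_sq_sub_sq_le_of_le_of_le hx0 hxj' (hq hl)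
    · calc min (x ^ 2 - q j ^ 2) (q j' ^ 2 - x ^ 2) ≤ |x ^ 2 - q j ^ 2| :=
            (min_le_left _ _).trans_eq hj.symm
        _ ≤ |x ^ 2 - q l ^ 2| :=
            abs_sq_sub_sq_le_of_le_of_le' (hq0 l) (hq (hjj'.le_of_lt hl)) hjx

end nearestSqDist

/-- The error `∫ₚ^q min (x² - p², q² - x²)` of the stretch between two consecutive points `p ≤ q`
(`integral_min_sq_sub_sq`). -/
noncomputable def cellCost (p q : ℝ) : ℝ :=
  2 / 3 * (p ^ 3 + q ^ 3) - 4 / 3 * ((p ^ 2 + q ^ 2) / 2) ^ (3 / 2 : ℝ)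

theorem integral_min_sq_sub_sq {p q : ℝ} (hp : 0 ≤ p) (hpq : p ≤ q) :
    ∫ x in p..q, min (x ^ 2 - p ^ 2) (q ^ 2 - x ^ 2) = cellCost p q := by
  set w := √((p ^ 2 + q ^ 2) / 2) with hw_def
  have hw2 : w ^ 2 = (p ^ 2 + q ^ 2) / 2 := Real.sq_sqrt (by positivity)
  have hw0 : 0 ≤ w := Real.sqrt_nonneg _
  have hpw : p ≤ w := by nlinarith
  have hwq : w ≤ q := by nlinarith
  have hcost : cellCost p q = 2 / 3 * (p ^ 3 + q ^ 3) - 4 / 3 * w ^ 3 := by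
    rw [cellCost, hw_def, Real.sqrt_eq_rpow, ← Real.rpow_mul_natCast (by positivity)]
    norm_num
  have hcont : Continuous fun x : ℝ => min (x ^ 2 - p ^ 2) (q ^ 2 - x ^ 2) := by fun_prop
  have hleft : EqOn (fun x : ℝ => min (x ^ 2 - p ^ 2) (q ^ 2 - x ^ 2)) (fun x => x ^ 2 - p ^ 2)
      (uIcc p w) := by
    intro x hx
    rw [uIcc_of_le hpw] at hx
    exact min_eq_left (by nlinarith [hx.1, hx.2])
  have hright : EqOn (fun x : ℝ => min (x ^ 2 - p ^ 2) (q ^ 2 - x ^ 2)) (fun x => q ^ 2 - x ^ 2)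
      (uIcc w q) := by
    intro x hx
    rw [uIcc_of_le hwq] at hx
    exact min_eq_right (by nlinarith [hx.1, hx.2])
  rw [← integral_add_adjacent_intervals (hcont.intervalIntegrable p w)
    (hcont.intervalIntegrable w q), integral_congr hleft, integral_congr hright, hcost]
  simp only [intervalIntegrable_pow, intervalIntegrable_const, intervalIntegral.integral_sub,
    integral_pow, Nat.reduceAdd, Nat.cast_ofNat, intervalIntegral.integral_const, smul_eq_mul]
  linear_combination (2 * w) * hw2

theorem hasDerivAt_cellCost_add_cellCost (a b t : ℝ) :
    HasDerivAt (fun s => cellCost a s + cellCost s b)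
      (2 * t * (2 * t - √((a ^ 2 + t ^ 2) / 2) - √((t ^ 2 + b ^ 2) / 2))) t := by
  have hpow : ∀ c : ℝ, HasDerivAt (fun s => ((c + s ^ 2) / 2) ^ (3 / 2 : ℝ))
      (3 / 2 * t * √((c + t ^ 2) / 2)) t := by
    intro c
    have := (((hasDerivAt_pow 2 t).const_add c).div_const 2).rpow_const (p := 3 / 2)
      (Or.inr (by norm_num))
    convert this using 1
    rw [Real.sqrt_eq_rpow, show (3 / 2 : ℝ) - 1 = 1 / 2 by norm_num]
    push_cast
    ring
  have hcube : HasDerivAt (fun s => s ^ 3) (3 * t ^ 2) t := by simpa using hasDerivAt_pow 3 t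
  have hsum : (fun s => cellCost a s + cellCost s b) = fun s =>
      2 / 3 * (a ^ 3 + b ^ 3) + 4 / 3 * s ^ 3 - 4 / 3 * ((a ^ 2 + s ^ 2) / 2) ^ (3 / 2 : ℝ)
        - 4 / 3 * ((b ^ 2 + s ^ 2) / 2) ^ (3 / 2 : ℝ) := by
    funext s
    simp only [cellCost, add_comm (s ^ 2) (b ^ 2)]
    ring
  rw [hsum, add_comm (t ^ 2) (b ^ 2)]
  refine ((((hcube.const_mul (4 / 3)).const_add (2 / 3 * (a ^ 3 + b ^ 3))).sub
    ((hpow (a ^ 2)).const_mul (4 / 3))).sub ((hpow (b ^ 2)).const_mul (4 / 3))).congr_deriv ?_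
  ring

theorem sq_eq_of_two_mul_eq_sqrt_add_sqrt {a b m : ℝ}
    (h : 2 * m = √((a ^ 2 + m ^ 2) / 2) + √((m ^ 2 + b ^ 2) / 2)) :
    m ^ 2 = 1 / 4 * (a ^ 2 + b ^ 2) + 1 / (4 * √2) * √(a ^ 4 + 6 * a ^ 2 * b ^ 2 + b ^ 4) := by
  set u := √((a ^ 2 + m ^ 2) / 2)
  set v := √((m ^ 2 + b ^ 2) / 2)
  have hu : u ^ 2 = (a ^ 2 + m ^ 2) / 2 := Real.sq_sqrt (by positivity)
  have hv : v ^ 2 = (m ^ 2 + b ^ 2) / 2 := Real.sq_sqrt (by positivity)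
  have huv : 2 * (u * v) = 3 * m ^ 2 - (a ^ 2 + b ^ 2) / 2 := by
    linear_combination (-(2 * m + u + v)) * h - hu - hv
  have hm2 : m ^ 2 ≤ 2 * (u * v) := by
    apply abs_le_of_sq_le_sq' _ (by positivity) |>.2
    nlinarith [sq_nonneg a, sq_nonneg b, sq_nonneg m]
  have hS : a ^ 4 + 6 * a ^ 2 * b ^ 2 + b ^ 4 = (4 * √2 * (m ^ 2 - (a ^ 2 + b ^ 2) / 4)) ^ 2 := by
    have h2 : √2 ^ 2 = 2 := Real.sq_sqrt (by norm_num)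
    have hkey : (3 * m ^ 2 - (a ^ 2 + b ^ 2) / 2) ^ 2 = (a ^ 2 + m ^ 2) * (m ^ 2 + b ^ 2) := by
      rw [← huv]
      linear_combination (4 * v ^ 2) * hu + (2 * (a ^ 2 + m ^ 2)) * hv
    linear_combination (-4) * hkey + (-16 * (m ^ 2 - (a ^ 2 + b ^ 2) / 4) ^ 2) * h2
  rw [hS, Real.sqrt_sq (by nlinarith [Real.sqrt_nonneg 2])]
  field_simp
  ring

theorem integral_nearestSqDist_update_eq {ι : Type*} [LinearOrder ι] [Finite ι] [DecidableEq ι]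
    {q : ι → ℝ} (hq : Monotone q) (hq0 : ∀ l, 0 ≤ q l) {iprev i inext : ι}
    (hprev : iprev ⋖ i) (hnext : i ⋖ inext) (h1 : q inext ≤ 1) {t : ℝ}
    (ht : t ∈ Icc (q iprev) (q inext)) :
    ∫ x in (0 : ℝ)..1, nearestSqDist (update q i t) x =
      (∫ x in (0 : ℝ)..q iprev, nearestSqDist q x) + (cellCost (q iprev) t + cellCost t (q inext))
        + ∫ x in q inext..1, nearestSqDist q x := by
  set a := q iprev
  set b := q inext
  have ha0 : 0 ≤ a := hq0 iprev
  have hai : a ≤ q i := hq hprev.le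
  have hib : q i ≤ b := hq hnext.le
  have hq' : Monotone (update q i t) := hq.update_of_covBy hprev hnext ht
  have hq'0 : ∀ l, 0 ≤ update q i t l :=
    forall_update_iff q (p := fun _ y => 0 ≤ y) |>.2 ⟨ha0.trans ht.1, fun l _ => hq0 l⟩
  have : Nonempty ι := ⟨i⟩
  have hint : ∀ u v, IntervalIntegrable (nearestSqDist (update q i t)) volume u v :=
    fun u v => (continuous_nearestSqDist _).intervalIntegrable u v
  have hleft : EqOn (nearestSqDist (update q i t)) (nearestSqDist q) (uIcc 0 a) := by
    intro x hx
    rw [uIcc_of_le ha0] at hx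
    exact nearestSqDist_update_eq hprev.ne (abs_sq_sub_sq_le_of_le_of_le hx.1 hx.2 ht.1)
      (abs_sq_sub_sq_le_of_le_of_le hx.1 hx.2 hai)
  have hright : EqOn (nearestSqDist (update q i t)) (nearestSqDist q) (uIcc b 1) := by
    intro x hx
    rw [uIcc_of_le h1] at hx
    exact nearestSqDist_update_eq hnext.ne' (abs_sq_sub_sq_le_of_le_of_le' (ha0.trans ht.1) ht.2 hx.1)
      (abs_sq_sub_sq_le_of_le_of_le' (ha0.trans hai) hib hx.1)
  have hmidleft : EqOn (nearestSqDist (update q i t)) (fun x => min (x ^ 2 - a ^ 2) (t ^ 2 - x ^ 2))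
      (uIcc a t) := by
    intro x hx
    rw [uIcc_of_le ht.1] at hx
    have := nearestSqDist_eq_min_of_covBy hq' hq'0 hprev (x := x)
      (by rwa [update_of_ne hprev.ne, update_self])
    rwa [update_of_ne hprev.ne, update_self] at this
  have hmidright : EqOn (nearestSqDist (update q i t)) (fun x => min (x ^ 2 - t ^ 2) (b ^ 2 - x ^ 2))
      (uIcc t b) := by
    intro x hx
    rw [uIcc_of_le ht.2] at hx
    have := nearestSqDist_eq_min_of_covBy hq' hq'0 hnext (x := x)
      (by rwa [update_of_ne hnext.ne', update_self])
    rwa [update_of_ne hnext.ne', update_self] at this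
  rw [← integral_add_adjacent_intervals (hint 0 a) (hint a 1),
    ← integral_add_adjacent_intervals (hint a t) (hint t 1),
    ← integral_add_adjacent_intervals (hint t b) (hint b 1), integral_congr hleft,
    integral_congr hmidleft, integral_congr hmidright, integral_congr hright,
    integral_min_sq_sub_sq ha0 ht.1, integral_min_sq_sub_sq (ha0.trans ht.1) ht.2]
  ring

/-- Stationarity condition for interior optimal quantization points of the
quadratic-environment CDM ρ(x,y) = |x² - y²| on [0,1] with uniform P:
x_i² = (1/4)(x_{i-1}² + x_{i+1}²)
        + (1/(4√2))√(x_{i-1}⁴ + 6 x_{i-1}² x_{i+1}² + x_{i+1}⁴). -/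
theorem quadratic_cdm_interior_stationarity (k : ℕ) (pts : Fin k → ℝ)
    (hmono : Monotone pts)
    (hrange : ∀ j, pts j ∈ Set.Icc (0 : ℝ) 1)
    (i iprev inext : Fin k)
    (hprev : (iprev : ℕ) + 1 = (i : ℕ)) (hnext : (i : ℕ) + 1 = (inext : ℕ))
    (hlt₁ : pts iprev < pts i) (hlt₂ : pts i < pts inext)
    -- pts i is optimal: it (locally) minimizes the reconstruction error as a
    -- function of the i-th quantization point, the others being fixed
    (hopt : IsLocalMin
      (fun t => ∫ x in (0:ℝ)..1,
        ⨅ j, |x ^ 2 - (Function.update pts i t j) ^ 2|) (pts i)) :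
    pts i ^ 2 =
      (1 / 4) * (pts iprev ^ 2 + pts inext ^ 2) +
      (1 / (4 * Real.sqrt 2)) *
        Real.sqrt (pts iprev ^ 4 + 6 * pts iprev ^ 2 * pts inext ^ 2 +
          pts inext ^ 4) := by
  have hprev' : iprev ⋖ i := Fin.covBy_iff.2 (Nat.covBy_iff_add_one_eq.2 hprev)
  have hnext' : i ⋖ inext := Fin.covBy_iff.2 (Nat.covBy_iff_add_one_eq.2 hnext)
  have hlocal : IsLocalMin (fun t => (∫ x in (0 : ℝ)..pts iprev, nearestSqDist pts x)
      + (cellCost (pts iprev) t + cellCost t (pts inext))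
      + ∫ x in pts inext..1, nearestSqDist pts x) (pts i) :=
    hopt.congr <| eventuallyEq_of_mem (Ioo_mem_nhds hlt₁ hlt₂) fun t ht =>
      integral_nearestSqDist_update_eq hmono (fun j => (hrange j).1) hprev' hnext'
        (hrange inext).2 (Ioo_subset_Icc_self ht)
  have hzero := hlocal.hasDerivAt_eq_zero
    (((hasDerivAt_cellCost_add_cellCost _ _ _).const_add _).add_const _)
  have hm0 : pts i ≠ 0 := ((hrange iprev).1.trans_lt hlt₁).ne'
  apply sq_eq_of_two_mul_eq_sqrt_add_sqrt
  linarith [(mul_eq_zero.1 hzero).resolve_left (by positivity)]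
end

section
/- If the CDM of an environment of measurable functions F on ℝⁿ with σ(y,y') = (y-y')² satisfies ρ(x,x') = K‖x - x'‖² for some constant K > 0 and all x, x' ∈ ℝⁿ, then for Q-almost every f ∈ F, f is an affine function on ℝⁿ (assuming each f is continuous). -/
/-!
Write `ρ(x, x') = ∫ (g x - g x')² dQ = K ‖x - x'‖²`. For the midpoint `m` of `x` and `y` we have
`ρ(x, m) = ρ(m, y) = ρ(x, y) / 4`, so `∫ (g x + g y - 2 g m)² dQ = 2ρ(x, m) + 2ρ(m, y) - ρ(x, y) = 0`:
almost every `g ω` maps the midpoint of `x, y` to the midpoint of `g ω x, g ω y`. Taking `x, y` in a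
countable dense set, almost every `g ω` does so on that set, hence everywhere by continuity, and a
continuous map preserving midpoints is affine.
-/

open MeasureTheory

section Midpoint

variable {E F : Type*} [NormedAddCommGroup E] [NormedSpace ℝ E]
  [NormedAddCommGroup F] [NormedSpace ℝ F]

theorem continuous_midpoint : Continuous fun p : E × E => midpoint ℝ p.1 p.2 := by
  simp only [midpoint_eq_smul_add]
  fun_prop

theorem Dense.map_midpoint_of_continuous {f : E → F} (hf : Continuous f) {s : Set E}
    (hs : Dense s) (h : ∀ x ∈ s, ∀ y ∈ s, f (midpoint ℝ x y) = midpoint ℝ (f x) (f y))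
    (x y : E) : f (midpoint ℝ x y) = midpoint ℝ (f x) (f y) :=
  congrFun (Continuous.ext_on (hs.prod hs) (f := fun p : E × E => f (midpoint ℝ p.1 p.2))
    (g := fun p => midpoint ℝ (f p.1) (f p.2)) (hf.comp continuous_midpoint)
    (continuous_midpoint.comp ((hf.comp continuous_fst).prodMk (hf.comp continuous_snd)))
    fun p hp => h p.1 hp.1 p.2 hp.2) (x, y)

theorem exists_linearMap_add_const_of_map_midpoint {f : E → F} (hf : Continuous f)
    (h : ∀ x y, f (midpoint ℝ x y) = midpoint ℝ (f x) (f y)) :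
    ∃ (L : E →ₗ[ℝ] F) (c : F), ∀ x, f x = L x + c :=
  let A := AffineMap.ofMapMidpoint f h hf
  ⟨A.linear, f 0, fun x => congrFun A.decomp x⟩

theorem ae_map_midpoint_of_integral_sq_sub {Ω : Type*} [MeasurableSpace Ω] {Q : Measure Ω}
    {g : Ω → E → ℝ} (hint : ∀ x x', Integrable (fun ω => (g ω x - g ω x') ^ 2) Q) {K : ℝ}
    (hρ : ∀ x x', ∫ ω, (g ω x - g ω x') ^ 2 ∂Q = K * ‖x - x'‖ ^ 2) (x y : E) :
    ∀ᵐ ω ∂Q, g ω (midpoint ℝ x y) = midpoint ℝ (g ω x) (g ω y) := by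
  set m := midpoint ℝ x y
  have hxm : ‖x - m‖ ^ 2 = ‖x - y‖ ^ 2 / 4 := by
    rw [left_sub_midpoint, norm_smul]
    norm_num [mul_pow]
    ring
  have hmy : ‖m - y‖ ^ 2 = ‖x - y‖ ^ 2 / 4 := by
    rw [midpoint_sub_right, norm_smul]
    norm_num [mul_pow]
    ring
  have hdefect : (fun ω => (g ω x + g ω y - 2 * g ω m) ^ 2)
      = fun ω => 2 * (g ω x - g ω m) ^ 2 + 2 * (g ω m - g ω y) ^ 2 - (g ω x - g ω y) ^ 2 := by
    funext ω; ring
  have hI : Integrable (fun ω => 2 * (g ω x - g ω m) ^ 2 + 2 * (g ω m - g ω y) ^ 2) Q :=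
    ((hint x m).const_mul 2).add ((hint m y).const_mul 2)
  have hzero : ∫ ω, (g ω x + g ω y - 2 * g ω m) ^ 2 ∂Q = 0 := by
    rw [hdefect, integral_sub hI (hint x y), integral_add ((hint x m).const_mul 2)
      ((hint m y).const_mul 2), integral_const_mul, integral_const_mul, hρ, hρ, hρ, hxm, hmy]
    ring
  have hae := (integral_eq_zero_iff_of_nonneg (fun ω => sq_nonneg _)
    (hdefect ▸ hI.sub (hint x y))).1 hzero
  filter_upwards [hae] with ω hω
  have : g ω x + g ω y - 2 * g ω m = 0 := pow_eq_zero_iff two_ne_zero |>.1 hω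
  rw [midpoint_eq_smul_add, invOf_eq_inv, smul_eq_mul]
  linarith

end Midpoint

theorem cdm_euclidean_implies_affine_general {Ω : Type*} [MeasurableSpace Ω]
    (n : ℕ) (Q : Measure Ω)
    (g : Ω → EuclideanSpace ℝ (Fin n) → ℝ)
    (hcont : ∀ ω, Continuous (g ω))
    (hint : ∀ x x', Integrable (fun ω => (g ω x - g ω x') ^ 2) Q)
    (K : ℝ)
    (hρ : ∀ x x', ∫ ω, (g ω x - g ω x') ^ 2 ∂Q = K * ‖x - x'‖ ^ 2) :
    ∀ᵐ ω ∂Q, ∃ (L : EuclideanSpace ℝ (Fin n) →ₗ[ℝ] ℝ) (c : ℝ),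
      ∀ x, g ω x = L x + c := by
  obtain ⟨s, hs_countable, hs_dense⟩ :=
    TopologicalSpace.exists_countable_dense (EuclideanSpace ℝ (Fin n))
  have hae : ∀ᵐ ω ∂Q, ∀ x ∈ s, ∀ y ∈ s,
      g ω (midpoint ℝ x y) = midpoint ℝ (g ω x) (g ω y) :=
    (ae_ball_iff hs_countable).2 fun x _ => (ae_ball_iff hs_countable).2 fun y _ =>
      ae_map_midpoint_of_integral_sq_sub hint hρ x y
  filter_upwards [hae] with ω hω
  exact exists_linearMap_add_const_of_map_midpoint (hcont ω)
    (hs_dense.map_midpoint_of_continuous (hcont ω) hω)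

/-- If the CDM of an environment of continuous functions on ℝⁿ with
σ(y,y') = (y-y')² equals K‖x - x'‖² for some K > 0, then Q-almost every
function in the environment is affine. -/
theorem cdm_euclidean_implies_affine {Ω : Type*} [MeasurableSpace Ω]
    (n : ℕ) (Q : Measure Ω) [IsProbabilityMeasure Q]
    (g : Ω → EuclideanSpace ℝ (Fin n) → ℝ)
    (hcont : ∀ ω, Continuous (g ω))
    (hint : ∀ x x', Integrable (fun ω => (g ω x - g ω x') ^ 2) Q)
    (K : ℝ) (hK : 0 < K)
    (hρ : ∀ x x', ∫ ω, (g ω x - g ω x') ^ 2 ∂Q = K * ‖x - x'‖ ^ 2) :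
    ∀ᵐ ω ∂Q, ∃ (L : EuclideanSpace ℝ (Fin n) →ₗ[ℝ] ℝ) (c : ℝ),
      ∀ x, g ω x = L x + c :=
  cdm_euclidean_implies_affine_general n Q g hcont hint K hρ
end
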